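/- arXiv:math/0007039 — 2 statements merged into one kernel-verified Lean document; each statement's English description precedes it below -/
import Mathlib

section
/- Suppose 𝔘_{2α+2β} ⊆ 𝔥 and there is an element u of 𝔥 such that φ_u ≠ 0, 𝗒_u ≠ 0, and y_u = 0. Then there exist a sequence (h_m) of elements of H and constants c, C > 0 such that ‖h_m‖ → ∞ as m → ∞ and c·‖h_m‖² ≤ ‖ρ(h_m)‖ ≤ C·‖h_m‖² for every m. -/
open scoped BigOperators

noncomputable section

/-- The matrix of the Hermitian form defining `SU(2,n)` (indices are 0-based;
the paper's 1-based entry `(i,j)` corresponds to `(i-1, j-1)` here). -/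
def Jmat (n : ℕ) : Matrix (Fin (n+2)) (Fin (n+2)) ℂ := fun i j =>
  if ((i:ℕ) = 0 ∧ (j:ℕ) = n+1) ∨ ((i:ℕ) = 1 ∧ (j:ℕ) = n)
      ∨ ((i:ℕ) = n ∧ (j:ℕ) = 1) ∨ ((i:ℕ) = n+1 ∧ (j:ℕ) = 0)
      ∨ (2 ≤ (i:ℕ) ∧ (i:ℕ) + 1 ≤ n ∧ i = j)
  then 1 else 0

/-- Membership in `G = SU(2,n)`. -/
def inG (n : ℕ) (g : Matrix (Fin (n+2)) (Fin (n+2)) ℂ) : Prop :=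
  g.conjTranspose * Jmat n * g = Jmat n ∧ g.det = 1

/-- Membership in the Lie algebra `𝔫` of strictly upper-triangular matrices `u`
with `uᴴJ + Ju = 0`. -/
def inLieN (n : ℕ) (u : Matrix (Fin (n+2)) (Fin (n+2)) ℂ) : Prop :=
  (∀ i j : Fin (n+2), (j:ℕ) ≤ (i:ℕ) → u i j = 0) ∧
  u.conjTranspose * Jmat n + Jmat n * u = 0

def phiC (n : ℕ) (u : Matrix (Fin (n+2)) (Fin (n+2)) ℂ) : ℂ :=
  u ⟨0, by omega⟩ ⟨1, by omega⟩

/-- The vector `x_u ∈ ℂ^{n-2}`, padded by zeros to a vector indexed by `Fin (n+2)`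
(its meaningful entries sit in columns `2,…,n-1`, i.e. the paper's `3,…,n`). -/
def xV (n : ℕ) (u : Matrix (Fin (n+2)) (Fin (n+2)) ℂ) : Fin (n+2) → ℂ := fun j =>
  if 2 ≤ (j:ℕ) ∧ (j:ℕ) + 1 ≤ n then u ⟨0, by omega⟩ j else 0

/-- The vector `y_u ∈ ℂ^{n-2}`, padded by zeros. -/
def yV (n : ℕ) (u : Matrix (Fin (n+2)) (Fin (n+2)) ℂ) : Fin (n+2) → ℂ := fun j =>
  if 2 ≤ (j:ℕ) ∧ (j:ℕ) + 1 ≤ n then u ⟨1, by omega⟩ j else 0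

def etaC (n : ℕ) (u : Matrix (Fin (n+2)) (Fin (n+2)) ℂ) : ℂ :=
  u ⟨0, by omega⟩ ⟨n, by omega⟩

/-- `𝗑_u = Im u_{1,n+2}`. -/
def sxR (n : ℕ) (u : Matrix (Fin (n+2)) (Fin (n+2)) ℂ) : ℝ :=
  (u ⟨0, by omega⟩ ⟨n+1, by omega⟩).im

/-- `𝗒_u = Im u_{2,n+1}`. -/
def syR (n : ℕ) (u : Matrix (Fin (n+2)) (Fin (n+2)) ℂ) : ℝ :=
  (u ⟨1, by omega⟩ ⟨n, by omega⟩).im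

/-- `x y† = Σ xⱼ ȳⱼ`. -/
def dotC (n : ℕ) (x y : Fin (n+2) → ℂ) : ℂ := ∑ j, x j * (starRingEnd ℂ) (y j)

/-- `|x|²` (a real number). -/
def nsqR (n : ℕ) (x : Fin (n+2) → ℂ) : ℝ := ∑ j, Complex.normSq (x j)

/-- Membership in `𝔷 = {u ∈ 𝔥 : φ_u = 0, x_u = 0, y_u = 0}`. -/
def inZ (n : ℕ) (𝔥 : Submodule ℝ (Matrix (Fin (n+2)) (Fin (n+2)) ℂ))
    (u : Matrix (Fin (n+2)) (Fin (n+2)) ℂ) : Prop :=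
  u ∈ 𝔥 ∧ phiC n u = 0 ∧ xV n u = 0 ∧ yV n u = 0

/-- Membership in the root space `𝔘_{2α+2β}`. -/
def inU2a2b (n : ℕ) (u : Matrix (Fin (n+2)) (Fin (n+2)) ℂ) : Prop :=
  inLieN n u ∧ phiC n u = 0 ∧ xV n u = 0 ∧ yV n u = 0 ∧ etaC n u = 0 ∧ syR n u = 0

/-- `H = exp 𝔥`, the image of `𝔥` under the matrix exponential. -/
def expSet (n : ℕ) (𝔥 : Submodule ℝ (Matrix (Fin (n+2)) (Fin (n+2)) ℂ)) :
    Set (Matrix (Fin (n+2)) (Fin (n+2)) ℂ) :=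
  (fun u => NormedSpace.exp u) '' (𝔥 : Set (Matrix (Fin (n+2)) (Fin (n+2)) ℂ))

/-- `‖h‖`: the maximum of the absolute values of the entries of `h`. -/
def entryNorm (n : ℕ) (h : Matrix (Fin (n+2)) (Fin (n+2)) ℂ) : ℝ :=
  Finset.univ.sup' Finset.univ_nonempty
    (fun p : Fin (n+2) × Fin (n+2) => ‖h p.1 p.2‖)

/-- `‖ρ(h)‖`: the maximum of the absolute values of the determinants of all
`2 × 2` submatrices of `h`. -/
def rhoNorm (n : ℕ) (h : Matrix (Fin (n+2)) (Fin (n+2)) ℂ) : ℝ :=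
  Finset.univ.sup' Finset.univ_nonempty
    (fun q : (Fin (n+2) × Fin (n+2)) × Fin (n+2) × Fin (n+2) =>
      ‖h q.1.1 q.2.1 * h q.1.2 q.2.2 - h q.1.1 q.2.2 * h q.1.2 q.2.1‖)

/-- `Δ(h)`: the determinant of the 2×2 submatrix of `h` in rows 1,2 and
columns n+1, n+2 (1-based). -/
def DeltaC (n : ℕ) (h : Matrix (Fin (n+2)) (Fin (n+2)) ℂ) : ℂ :=
  h ⟨0, by omega⟩ ⟨n, by omega⟩ * h ⟨1, by omega⟩ ⟨n+1, by omega⟩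
    - h ⟨0, by omega⟩ ⟨n+1, by omega⟩ * h ⟨1, by omega⟩ ⟨n, by omega⟩

namespace Stmt5Aux

def ix0 (n : ℕ) : Fin (n+2) := ⟨0, by omega⟩
def ix1 (n : ℕ) : Fin (n+2) := ⟨1, by omega⟩
def ixN (n : ℕ) : Fin (n+2) := ⟨n, by omega⟩
def ixN1 (n : ℕ) : Fin (n+2) := ⟨n+1, by omega⟩

variable {n : ℕ}

lemma ix_cases (i : Fin (n+2)) :
    i = ix0 n ∨ i = ix1 n ∨ (2 ≤ (i:ℕ) ∧ (i:ℕ)+1 ≤ n) ∨ i = ixN n ∨ i = ixN1 n := by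
  simp only [Fin.ext_iff, ix0, ix1, ixN, ixN1]
  have := i.isLt
  omega

lemma jrow0 (hn : 2 ≤ n) (k : Fin (n+2)) :
    Jmat n (ix0 n) k = if k = ixN1 n then 1 else 0 := by
  simp only [Jmat, Fin.ext_iff, ix0, ixN1, Fin.val_mk]
  by_cases h : (k:ℕ) = n+1 <;> simp [h] <;> omega

lemma jrow1 (hn : 2 ≤ n) (k : Fin (n+2)) :
    Jmat n (ix1 n) k = if k = ixN n then 1 else 0 := by
  simp only [Jmat, Fin.ext_iff, ix1, ixN, Fin.val_mk]
  by_cases h : (k:ℕ) = n <;> simp [h] <;> omega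

lemma jrowN (hn : 2 ≤ n) (k : Fin (n+2)) :
    Jmat n (ixN n) k = if k = ix1 n then 1 else 0 := by
  simp only [Jmat, Fin.ext_iff, ixN, ix1, Fin.val_mk]
  by_cases h : (k:ℕ) = 1 <;> simp [h] <;> omega

lemma jrowN1 (hn : 2 ≤ n) (k : Fin (n+2)) :
    Jmat n (ixN1 n) k = if k = ix0 n then 1 else 0 := by
  simp only [Jmat, Fin.ext_iff, ixN1, ix0, Fin.val_mk]
  by_cases h : (k:ℕ) = 0 <;> simp [h] <;> omega

lemma jrowMid (hn : 2 ≤ n) (i k : Fin (n+2)) (h2 : 2 ≤ (i:ℕ)) (h3 : (i:ℕ)+1 ≤ n) :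
    Jmat n i k = if k = i then 1 else 0 := by
  simp only [Jmat, Fin.ext_iff, Fin.val_mk]
  by_cases h : (k:ℕ) = (i:ℕ) <;> simp [h, -Fin.val_eq_zero_iff] <;> omega

lemma jcol0 (hn : 2 ≤ n) (k : Fin (n+2)) :
    Jmat n k (ix0 n) = if k = ixN1 n then 1 else 0 := by
  simp only [Jmat, Fin.ext_iff, ix0, ixN1, Fin.val_mk]
  by_cases h : (k:ℕ) = n+1 <;> simp [h, -Fin.val_eq_zero_iff] <;> omega

lemma jcolN (hn : 2 ≤ n) (k : Fin (n+2)) :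
    Jmat n k (ixN n) = if k = ix1 n then 1 else 0 := by
  simp only [Jmat, Fin.ext_iff, ixN, ix1, Fin.val_mk]
  by_cases h : (k:ℕ) = 1 <;> simp [h] <;> omega

lemma jcolN1 (hn : 2 ≤ n) (k : Fin (n+2)) :
    Jmat n k (ixN1 n) = if k = ix0 n then 1 else 0 := by
  simp only [Jmat, Fin.ext_iff, ixN1, ix0, Fin.val_mk]
  by_cases h : (k:ℕ) = 0 <;> simp [h] <;> omega

lemma jcolMid (hn : 2 ≤ n) (k j : Fin (n+2)) (h2 : 2 ≤ (j:ℕ)) (h3 : (j:ℕ)+1 ≤ n) :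
    Jmat n k j = if k = j then 1 else 0 := by
  simp only [Jmat, Fin.ext_iff, Fin.val_mk]
  by_cases h : (k:ℕ) = (j:ℕ) <;> simp [h, -Fin.val_eq_zero_iff] <;> omega

variable {u : Matrix (Fin (n+2)) (Fin (n+2)) ℂ}

lemma relApply (hrel : u.conjTranspose * Jmat n + Jmat n * u = 0) (i j : Fin (n+2)) :
    (∑ k, (starRingEnd ℂ) (u k i) * Jmat n k j) + ∑ k, Jmat n i k * u k j = 0 := by
  have := congrFun (congrFun hrel i) j
  simpa [Matrix.mul_apply, Matrix.add_apply, Matrix.conjTranspose_apply] using this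

section rows

variable (hn : 2 ≤ n) (htri : ∀ i j : Fin (n+2), (j:ℕ) ≤ (i:ℕ) → u i j = 0)
  (hrel : u.conjTranspose * Jmat n + Jmat n * u = 0)
  (hy : yV n u = 0)

include hn htri hy in
lemma row1 (l : Fin (n+2)) (h1 : (l:ℕ) ≠ n) (h2 : (l:ℕ) ≠ n+1) : u (ix1 n) l = 0 := by
  rcases Nat.lt_or_ge (l:ℕ) 2 with h | h
  · exact htri _ _ (by simp only [ix1, Fin.val_mk]; omega)
  · have hc := congrFun hy l
    have hl := l.isLt
    simp only [yV, Pi.zero_apply, if_pos (by omega : 2 ≤ (l:ℕ) ∧ (l:ℕ)+1 ≤ n)] at hc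
    exact hc

include hn htri hrel hy in
lemma rowMid (k l : Fin (n+2)) (hk1 : 2 ≤ (k:ℕ)) (hk2 : (k:ℕ)+1 ≤ n)
    (hl : (l:ℕ) ≠ n+1) : u k l = 0 := by
  rcases Nat.lt_or_ge (k:ℕ) (l:ℕ) with h | h
  · rcases eq_or_ne (l:ℕ) n with hln | hln
    · have hlN : l = ixN n := by simp [Fin.ext_iff, ixN, hln]
      subst hlN
      have := relApply hrel k (ixN n)
      simp only [jcolN hn, jrowMid hn k _ hk1 hk2, mul_ite, ite_mul, mul_one, one_mul,
        mul_zero, zero_mul, Finset.sum_ite_eq', Finset.mem_univ, if_true] at this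
      have h10 : u (ix1 n) k = 0 := row1 hn htri hy k (by omega) (by omega)
      rw [h10] at this
      simpa using this
    · have := relApply hrel k l
      simp only [jcolMid hn _ l (by omega) (by omega), jrowMid hn k _ hk1 hk2, mul_ite,
        ite_mul, mul_one, one_mul, mul_zero, zero_mul, Finset.sum_ite_eq', Finset.mem_univ,
        if_true] at this
      rw [htri l k (by omega)] at this
      simpa using this
  · exact htri _ _ h

include hn hrel in
lemma u_nn1 : u (ixN n) (ixN1 n) = -(starRingEnd ℂ) (u (ix0 n) (ix1 n)) := by
  have := relApply hrel (ix1 n) (ixN1 n)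
  simp only [jcolN1 hn, jrow1 hn, mul_ite, ite_mul, mul_one, one_mul, mul_zero, zero_mul,
    Finset.sum_ite_eq', Finset.mem_univ, if_true] at this
  linear_combination this

include hn hrel in
lemma u_1n : u (ix1 n) (ixN n) = Complex.I * (syR n u : ℝ) := by
  have := relApply hrel (ixN n) (ixN n)
  simp only [jcolN hn, jrowN hn, mul_ite, ite_mul, mul_one, one_mul, mul_zero, zero_mul,
    Finset.sum_ite_eq', Finset.mem_univ, if_true] at this
  have hre : (u (ix1 n) (ixN n)).re = 0 := by
    have := congrArg Complex.re this
    simp [Complex.add_re, Complex.conj_re] at this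
    linarith
  have him : (u (ix1 n) (ixN n)).im = syR n u := rfl
  apply Complex.ext <;> simp [hre, him]

include hn hrel in
lemma u_0n1 : u (ix0 n) (ixN1 n) = Complex.I * (sxR n u : ℝ) := by
  have := relApply hrel (ixN1 n) (ixN1 n)
  simp only [jcolN1 hn, jrowN1 hn, mul_ite, ite_mul, mul_one, one_mul, mul_zero, zero_mul,
    Finset.sum_ite_eq', Finset.mem_univ, if_true] at this
  have hre : (u (ix0 n) (ixN1 n)).re = 0 := by
    have := congrArg Complex.re this
    simp [Complex.add_re, Complex.conj_re] at this
    linarith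
  have him : (u (ix0 n) (ixN1 n)).im = sxR n u := rfl
  apply Complex.ext <;> simp [hre, him]

include htri in
lemma rowN (l : Fin (n+2)) (hl : (l:ℕ) ≠ n+1) : u (ixN n) l = 0 :=
  htri _ _ (by have := l.isLt; simp only [ixN, Fin.val_mk]; omega)

include htri in
lemma rowN1 (l : Fin (n+2)) : u (ixN1 n) l = 0 :=
  htri _ _ (by have := l.isLt; simp only [ixN1, Fin.val_mk]; omega)

end rows

section usq

variable (hn : 2 ≤ n) (htri : ∀ i j : Fin (n+2), (j:ℕ) ≤ (i:ℕ) → u i j = 0)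
variable (hrow1 : ∀ l : Fin (n+2), (l:ℕ) ≠ n → (l:ℕ) ≠ n+1 → u (ix1 n) l = 0)
variable (hrowMid : ∀ k l : Fin (n+2), 2 ≤ (k:ℕ) → (k:ℕ)+1 ≤ n → (l:ℕ) ≠ n+1 → u k l = 0)

include htri hrow1 in
lemma U2_row1 (j : Fin (n+2)) (hj : (j:ℕ) ≠ n+1) : (u*u) (ix1 n) j = 0 := by
  rw [Matrix.mul_apply]
  apply Finset.sum_eq_zero
  intro k _
  rcases ix_cases k with hk|hk|hk|hk|hk
  · subst hk; rw [htri _ _ (by simp [ix0, ix1])]; ring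
  · subst hk; rw [htri _ _ (by simp [ix1])]; ring
  · rw [hrow1 k (by omega) (by omega)]; ring
  · subst hk; rw [rowN htri j hj]; ring
  · subst hk; rw [rowN1 htri j]; ring

include htri hrowMid in
lemma U2_rowMid (i j : Fin (n+2)) (hi1 : 2 ≤ (i:ℕ)) (hi2 : (i:ℕ)+1 ≤ n) :
    (u*u) i j = 0 := by
  rw [Matrix.mul_apply]
  apply Finset.sum_eq_zero
  intro k _
  rcases eq_or_ne (k:ℕ) (n+1) with hk|hk
  · rw [show k = ixN1 n from Fin.ext hk, rowN1 htri j]; ring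
  · rw [hrowMid i k hi1 hi2 hk]; ring

include htri in
lemma U2_rowN (j : Fin (n+2)) : (u*u) (ixN n) j = 0 := by
  rw [Matrix.mul_apply]
  apply Finset.sum_eq_zero
  intro k _
  rcases eq_or_ne (k:ℕ) (n+1) with hk|hk
  · rw [show k = ixN1 n from Fin.ext hk, rowN1 htri j]; ring
  · rw [rowN htri k hk]; ring

include htri in
lemma U2_rowN1 (j : Fin (n+2)) : (u*u) (ixN1 n) j = 0 := by
  rw [Matrix.mul_apply]
  apply Finset.sum_eq_zero
  intro k _
  rw [rowN1 htri k]; ring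

include htri hrow1 hrowMid in
lemma U2_row0 (j : Fin (n+2)) (hj1 : (j:ℕ) ≠ n) (hj2 : (j:ℕ) ≠ n+1) :
    (u*u) (ix0 n) j = 0 := by
  rw [Matrix.mul_apply]
  apply Finset.sum_eq_zero
  intro k _
  rcases ix_cases k with hk|hk|hk|hk|hk
  · subst hk; rw [htri _ _ (by simp [ix0])]; ring
  · subst hk; rw [hrow1 j hj1 hj2]; ring
  · rw [hrowMid k j hk.1 hk.2 hj2]; ring
  · subst hk; rw [rowN htri j hj2]; ring
  · subst hk; rw [rowN1 htri j]; ring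

include hn htri hrowMid in
lemma U2_0n : (u*u) (ix0 n) (ixN n) = u (ix0 n) (ix1 n) * u (ix1 n) (ixN n) := by
  rw [Matrix.mul_apply]
  apply Finset.sum_eq_single
  · intro k _ hk1
    rcases ix_cases k with hk|hk|hk|hk|hk
    · subst hk; rw [htri _ _ (by simp [ix0])]; ring
    · exact absurd hk hk1
    · rw [hrowMid k (ixN n) hk.1 hk.2 (by simp only [ixN, Fin.val_mk]; omega)]; ring
    · subst hk; rw [rowN htri (ixN n) (by simp only [ixN, Fin.val_mk]; omega)]; ring
    · subst hk; rw [rowN1 htri (ixN n)]; ring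
  · intro h; exact absurd (Finset.mem_univ _) h

include hn htri hrow1 in
lemma U2_1n1 : (u*u) (ix1 n) (ixN1 n) = u (ix1 n) (ixN n) * u (ixN n) (ixN1 n) := by
  rw [Matrix.mul_apply]
  apply Finset.sum_eq_single
  · intro k _ hk1
    rcases ix_cases k with hk|hk|hk|hk|hk
    · subst hk; rw [htri _ _ (by simp [ix0, ix1])]; ring
    · subst hk; rw [htri _ _ (by simp [ix1])]; ring
    · rw [hrow1 k (by omega) (by omega)]; ring
    · exact absurd hk hk1
    · subst hk; rw [rowN1 htri (ixN1 n)]; ring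
  · intro h; exact absurd (Finset.mem_univ _) h

include hn htri hrow1 hrowMid in
lemma U3_apply (i j : Fin (n+2)) :
    (u*u*u) i j = if i = ix0 n ∧ j = ixN1 n
      then u (ix0 n) (ix1 n) * u (ix1 n) (ixN n) * u (ixN n) (ixN1 n) else 0 := by
  rcases ix_cases i with hi|hi|hi|hi|hi
  · subst hi
    rcases eq_or_ne j (ixN1 n) with hj|hj
    · subst hj
      rw [if_pos ⟨rfl, rfl⟩, Matrix.mul_apply]
      rw [show (∑ k, (u*u) (ix0 n) k * u k (ixN1 n))
          = (u*u) (ix0 n) (ixN n) * u (ixN n) (ixN1 n) from ?_]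
      · rw [U2_0n hn htri hrowMid]
      · apply Finset.sum_eq_single
        · intro k _ hk1
          rcases eq_or_ne (k:ℕ) (n+1) with hk|hk
          · rw [show k = ixN1 n from Fin.ext hk, rowN1 htri]; ring
          · rw [U2_row0 htri hrow1 hrowMid k
              (fun hkn => hk1 (Fin.ext hkn)) hk]; ring
        · intro h; exact absurd (Finset.mem_univ _) h
    · rw [if_neg (by tauto), Matrix.mul_apply]
      apply Finset.sum_eq_zero
      intro k _
      rcases eq_or_ne (k:ℕ) n with hk|hk
      · rw [show k = ixN n from Fin.ext hk,
          rowN htri j (fun hj2 => hj (Fin.ext hj2))]; ring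
      · rcases eq_or_ne (k:ℕ) (n+1) with hk2|hk2
        · rw [show k = ixN1 n from Fin.ext hk2, rowN1 htri j]; ring
        · rw [U2_row0 htri hrow1 hrowMid k hk hk2]; ring
  all_goals {
    rw [if_neg (by
      rintro ⟨h1, h2⟩
      first
      | (subst h1; simp only [ix0, ix1, ixN, ixN1, Fin.ext_iff, Fin.val_mk] at hi; omega)
      | (rw [h1] at hi; simp only [ix0, ix1, ixN, ixN1, Fin.ext_iff, Fin.val_mk] at hi
         omega)), Matrix.mul_apply]
    apply Finset.sum_eq_zero
    intro k _
    first
    | (subst hi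
       rcases eq_or_ne (k:ℕ) (n+1) with hk|hk
       · rw [show k = ixN1 n from Fin.ext hk, rowN1 htri j]; ring
       · rw [U2_row1 htri hrow1 k hk]; ring)
    | (rw [U2_rowMid htri hrowMid i k hi.1 hi.2]; ring)
    | (subst hi; rw [U2_rowN htri k]; ring)
    | (subst hi; rw [U2_rowN1 htri k]; ring) }

include hn htri hrow1 hrowMid in
lemma hU4 : (u*u*u)*u = 0 := by
  ext i j
  rw [Matrix.mul_apply, Matrix.zero_apply]
  apply Finset.sum_eq_zero
  intro k _
  rw [U3_apply hn htri hrow1 hrowMid]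
  by_cases hik : i = ix0 n ∧ k = ixN1 n
  · rw [if_pos hik, hik.2, rowN1 htri j, mul_zero]
  · rw [if_neg hik, zero_mul]

end usq

lemma exp_of_nilp4 (v : Matrix (Fin (n+2)) (Fin (n+2)) ℂ) (h4 : v*v*v*v = 0) :
    NormedSpace.exp v = 1 + v + (2:ℂ)⁻¹ • (v*v) + (6:ℂ)⁻¹ • (v*v*v) := by
  have hpow : ∀ k, 4 ≤ k → v ^ k = 0 := by
    intro k hk
    have h4' : v ^ 4 = 0 := by
      rw [show (4:ℕ) = 3+1 from rfl, pow_succ, show (3:ℕ) = 2+1 from rfl, pow_succ,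
        pow_two, h4]
    calc v ^ k = v ^ 4 * v ^ (k-4) := by rw [← pow_add]; congr 1; omega
    _ = 0 := by rw [h4', zero_mul]
  rw [NormedSpace.exp_eq_tsum ℂ]
  simp only []
  show (∑' k : ℕ, ((k.factorial : ℂ))⁻¹ • v ^ k) = _
  rw [tsum_eq_sum (s := Finset.range 4) (by
    intro k hk
    rw [hpow k (by simpa using hk), smul_zero])]
  simp [Finset.sum_range_succ, Nat.factorial, pow_succ, pow_two]

def Wm (n : ℕ) (τ : ℝ) : Matrix (Fin (n+2)) (Fin (n+2)) ℂ :=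
  Matrix.single (ix0 n) (ixN1 n) ((τ:ℂ) * Complex.I)

lemma Wm_apply (τ : ℝ) (i j : Fin (n+2)) :
    Wm n τ i j = if ix0 n = i ∧ ixN1 n = j then (τ:ℂ) * Complex.I else 0 := rfl

section vpow

variable (hcol0 : ∀ k : Fin (n+2), u k (ix0 n) = 0)
  (hrowN1' : ∀ l : Fin (n+2), u (ixN1 n) l = 0)
  (hU4' : (u*u*u)*u = 0)

include hcol0 in
lemma hUW (τ : ℝ) : u * Wm n τ = 0 := by
  ext i j
  rw [Matrix.mul_apply, Matrix.zero_apply]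
  apply Finset.sum_eq_zero
  intro k _
  rw [Wm_apply]
  rcases eq_or_ne k (ix0 n) with hk|hk
  · subst hk; rw [hcol0 i, zero_mul]
  · rw [if_neg (by rintro ⟨h1, _⟩; exact hk h1.symm), mul_zero]

include hrowN1' in
lemma hWU (τ : ℝ) : Wm n τ * u = 0 := by
  ext i j
  rw [Matrix.mul_apply, Matrix.zero_apply]
  apply Finset.sum_eq_zero
  intro k _
  rw [Wm_apply]
  rcases eq_or_ne k (ixN1 n) with hk|hk
  · subst hk; rw [hrowN1' j, mul_zero]
  · rw [if_neg (by rintro ⟨_, h2⟩; exact hk h2.symm), zero_mul]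

lemma hWW (τ τ' : ℝ) : Wm n τ * Wm n τ' = 0 := by
  ext i j
  rw [Matrix.mul_apply, Matrix.zero_apply]
  apply Finset.sum_eq_zero
  intro k _
  rw [Wm_apply, Wm_apply]
  have hne : ¬ (ix0 n = ixN1 n) := by simp [ix0, ixN1, Fin.ext_iff]
  rcases eq_or_ne k (ixN1 n) with hk|hk
  · subst hk
    rw [show (if ix0 n = ixN1 n ∧ ixN1 n = j then (τ':ℂ)*Complex.I else 0) = 0
      from if_neg (fun h => hne h.1), mul_zero]
  · rw [if_neg (by rintro ⟨_, h2⟩; exact hk h2.symm), zero_mul]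

variable (s τ : ℝ)

include hcol0 hrowN1' in
lemma hv2 : (s • u + Wm n τ) * (s • u + Wm n τ) = (s*s) • (u*u) := by
  rw [add_mul, mul_add, mul_add, smul_mul_assoc, smul_mul_assoc, mul_smul_comm,
    mul_smul_comm, hUW hcol0, hWU hrowN1', hWW, smul_smul]
  simp

include hcol0 hrowN1' in
lemma hv3 : (s • u + Wm n τ) * (s • u + Wm n τ) * (s • u + Wm n τ)
    = (s*s*s) • (u*u*u) := by
  rw [hv2 hcol0 hrowN1', mul_add, smul_mul_assoc, mul_smul_comm, smul_smul,
    smul_mul_assoc, Matrix.mul_assoc u u (Wm n τ), hUW hcol0 τ, mul_zero, smul_zero,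
    add_zero]

include hcol0 hrowN1' hU4' in
lemma hv4 : (s • u + Wm n τ) * (s • u + Wm n τ) * (s • u + Wm n τ) * (s • u + Wm n τ)
    = 0 := by
  rw [hv3 hcol0 hrowN1', mul_add, smul_mul_assoc, mul_smul_comm, smul_smul, hU4',
    smul_mul_assoc, Matrix.mul_assoc (u*u) u (Wm n τ), hUW hcol0 τ]
  simp

include hcol0 hrowN1' hU4' in
lemma expApply (i j : Fin (n+2)) :
    (NormedSpace.exp (s • u + Wm n τ)) i j
      = (if i = j then 1 else 0)
        + ((s:ℂ) * u i j + (if ix0 n = i ∧ ixN1 n = j then (τ:ℂ) * Complex.I else 0))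
        + (2:ℂ)⁻¹ * ((s:ℂ)*(s:ℂ)) * (u*u) i j
        + (6:ℂ)⁻¹ * ((s:ℂ)*(s:ℂ)*(s:ℂ)) * (u*u*u) i j := by
  rw [exp_of_nilp4 _ (hv4 hcol0 hrowN1' hU4' s τ), hv3 hcol0 hrowN1', hv2 hcol0 hrowN1']
  simp only [Matrix.add_apply, Matrix.smul_apply, Matrix.one_apply, Wm_apply,
    Complex.real_smul, smul_eq_mul, Complex.ofReal_mul]
  ring

end vpow

end Stmt5Aux


set_option maxHeartbeats 2000000 in
theorem stmt5 (n : ℕ) (hn : 2 ≤ n)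
    (𝔥 : Submodule ℝ (Matrix (Fin (n+2)) (Fin (n+2)) ℂ))
    (h_sub : ∀ u ∈ 𝔥, inLieN n u)
    (h_bracket : ∀ u ∈ 𝔥, ∀ v ∈ 𝔥, u * v - v * u ∈ 𝔥)
    (hroot : ∀ w : Matrix (Fin (n+2)) (Fin (n+2)) ℂ, inU2a2b n w → w ∈ 𝔥)
    (u : Matrix (Fin (n+2)) (Fin (n+2)) ℂ) (hu : u ∈ 𝔥)
    (hphi : phiC n u ≠ 0) (hsy : syR n u ≠ 0) (hy : yV n u = 0) :
    ∃ (h : ℕ → Matrix (Fin (n+2)) (Fin (n+2)) ℂ) (c C : ℝ),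
      0 < c ∧ 0 < C ∧ (∀ m, h m ∈ expSet n 𝔥) ∧
      Filter.Tendsto (fun m => entryNorm n (h m)) Filter.atTop Filter.atTop ∧
      ∀ m, c * (entryNorm n (h m))^2 ≤ rhoNorm n (h m) ∧
        rhoNorm n (h m) ≤ C * (entryNorm n (h m))^2 := by
  classical
  open Stmt5Aux in
  obtain ⟨htri, hrel⟩ := h_sub u hu
  -- abbreviations
  set yy : ℝ := syR n u with hyydef
  have hyy : yy ≠ 0 := hsy
  have hφ : u (ix0 n) (ix1 n) ≠ 0 := hphi
  -- structural facts about u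
  have hrow1' : ∀ l : Fin (n+2), (l:ℕ) ≠ n → (l:ℕ) ≠ n+1 → u (ix1 n) l = 0 :=
    fun l => row1 hn htri hy l
  have hrowMid' : ∀ k l : Fin (n+2), 2 ≤ (k:ℕ) → (k:ℕ)+1 ≤ n → (l:ℕ) ≠ n+1 → u k l = 0 :=
    fun k l => rowMid hn htri hrel hy k l
  have hcol0 : ∀ k : Fin (n+2), u k (ix0 n) = 0 :=
    fun k => htri _ _ (by simp [ix0])
  have hrowN1'' : ∀ l : Fin (n+2), u (ixN1 n) l = 0 := rowN1 htri
  have hU4' : (u*u*u)*u = 0 := hU4 hn htri hrow1' hrowMid'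
  have hu1n : u (ix1 n) (ixN n) = Complex.I * (yy:ℝ) := u_1n hn hrel
  have hunn1 : u (ixN n) (ixN1 n) = -(starRingEnd ℂ) (u (ix0 n) (ix1 n)) := u_nn1 hn hrel
  have hu0n1 : u (ix0 n) (ixN1 n) = Complex.I * (sxR n u : ℝ) := u_0n1 hn hrel
  -- index disequalities
  have hne_1N : (ix1 n) ≠ (ixN n) := by simp [ix1, ixN, Fin.ext_iff]; omega
  have hne_0N : (ix0 n) ≠ (ixN n) := by simp [ix0, ixN, Fin.ext_iff]; omega
  have hne_0N1 : (ix0 n) ≠ (ixN1 n) := by simp [ix0, ixN1, Fin.ext_iff]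
  have hne_1N1 : (ix1 n) ≠ (ixN1 n) := by simp [ix1, ixN1, Fin.ext_iff]; omega
  have hne_01 : (ix0 n) ≠ (ix1 n) := by simp [ix0, ix1, Fin.ext_iff]
  have hvalN : ((ixN n : Fin (n+2)):ℕ) = n := rfl
  have hvalN1 : ((ixN1 n : Fin (n+2)):ℕ) = n+1 := rfl
  -- constants
  set Cu : ℝ := entryNorm n u with hCudef
  have hCuB : ∀ i j, ‖u i j‖ ≤ Cu :=
    fun i j => Finset.le_sup' (fun p : Fin (n+2) × Fin (n+2) => ‖u p.1 p.2‖)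
      (Finset.mem_univ ((i, j)))
  have hCu0 : 0 ≤ Cu := le_trans (norm_nonneg _) (hCuB (ix0 n) (ix0 n))
  have hU2B : ∀ i j, ‖(u*u) i j‖ ≤ (n+2)*Cu^2 := by
    intro i j
    rw [Matrix.mul_apply]
    refine le_trans (norm_sum_le _ _) ?_
    have : ∀ k : Fin (n+2), ‖u i k * u k j‖ ≤ Cu^2 := by
      intro k
      rw [norm_mul, sq]
      exact mul_le_mul (hCuB i k) (hCuB k j) (norm_nonneg _) hCu0
    calc (∑ k, ‖u i k * u k j‖) ≤ ∑ _k : Fin (n+2), Cu^2 :=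
          Finset.sum_le_sum (fun k _ => this k)
      _ = (n+2)*Cu^2 := by
          rw [Finset.sum_const, Finset.card_univ, Fintype.card_fin, nsmul_eq_mul]
          push_cast; ring
  set K : ℝ := 1 + Cu + (n+2)*Cu^2 with hKdef
  have hK1 : 1 ≤ K := by nlinarith [sq_nonneg Cu]
  -- u² special values
  have hA2 : (u*u) (ix0 n) (ixN n) = u (ix0 n) (ix1 n) * (Complex.I * (yy:ℝ)) := by
    rw [U2_0n hn htri hrowMid', hu1n]
  have hB2 : (u*u) (ix1 n) (ixN1 n)
      = (Complex.I * (yy:ℝ)) * (-(starRingEnd ℂ) (u (ix0 n) (ix1 n))) := by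
    rw [U2_1n1 hn htri hrow1', hu1n, hunn1]
  set a2 : ℂ := u (ix0 n) (ix1 n) * (Complex.I * (yy:ℝ)) with ha2def
  set b2 : ℂ := (Complex.I * (yy:ℝ)) * (-(starRingEnd ℂ) (u (ix0 n) (ix1 n))) with hb2def
  set dd : ℂ := (u*u) (ix0 n) (ixN1 n) with hdddef
  set ηe : ℂ := u (ix0 n) (ixN n) with hηedef
  set ηe' : ℂ := u (ix1 n) (ixN1 n) with hηe'def
  set P : ℝ := Complex.normSq (u (ix0 n) (ix1 n)) * yy^2 with hPdef
  have hP : 0 < P := mul_pos (Complex.normSq_pos.2 hφ)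
    (lt_of_le_of_ne (sq_nonneg yy) (Ne.symm (pow_ne_zero 2 hyy)))
  have hab : a2 * b2 = ((P:ℝ):ℂ) := by
    have hmc : u (ix0 n) (ix1 n) * (starRingEnd ℂ) (u (ix0 n) (ix1 n))
        = ((Complex.normSq (u (ix0 n) (ix1 n)) : ℝ) : ℂ) := Complex.mul_conj _
    rw [ha2def, hb2def, hPdef]
    push_cast
    rw [show (u (ix0 n) (ix1 n) * (Complex.I*(yy:ℂ)))*((Complex.I*(yy:ℂ))*(-(starRingEnd ℂ) (u (ix0 n) (ix1 n))))
        = -(Complex.I*Complex.I)*(((yy:ℂ)*(yy:ℂ))*(u (ix0 n) (ix1 n)*(starRingEnd ℂ) (u (ix0 n) (ix1 n)))) from by ring,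
      Complex.I_mul_I, hmc]
    push_cast
    ring
  set c3 : ℂ := (2:ℂ)⁻¹ * (ηe*b2 + a2*ηe' - Complex.I*(yy:ℂ)*dd) with hc3def
  set c2 : ℂ := ηe*ηe' with hc2def
  set Q : ℝ := ‖c3‖ + ‖c2‖ with hQdef
  have hQ0 : 0 ≤ Q := add_nonneg (norm_nonneg _) (norm_nonneg _)
  set M : ℝ := 1 + 8*Q/P with hMdef
  set s : ℕ → ℝ := fun m => (m:ℝ) + M with hsdef
  have hs1 : ∀ m, 1 ≤ s m := by
    intro m
    have h1 : 0 ≤ 8*Q/P := by positivity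
    have h2 : (0:ℝ) ≤ m := Nat.cast_nonneg m
    simp only [hsdef, hMdef]
    linarith
  have hs0 : ∀ m, 0 < s m := fun m => lt_of_lt_of_le one_pos (hs1 m)
  have hsQ : ∀ m, 8*Q ≤ s m * P := by
    intro m
    have h1 : 8*Q/P ≤ s m := by
      have h2 : (0:ℝ) ≤ m := Nat.cast_nonneg m
      simp only [hsdef, hMdef]
      linarith
    calc 8*Q = (8*Q/P) * P := by field_simp
      _ ≤ s m * P := mul_le_mul_of_nonneg_right h1 hP.le
  set τ : ℕ → ℝ := fun m => -(s m * sxR n u) + (s m)^3 * (yy * Complex.normSq (u (ix0 n) (ix1 n)))/6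
    with hτdef
  set hfun : ℕ → Matrix (Fin (n+2)) (Fin (n+2)) ℂ :=
    fun m => NormedSpace.exp (s m • u + Wm n (τ m)) with hfundef
  -- membership
  have hWinU : ∀ t : ℝ, inU2a2b n (Wm n t) := by
    intro t
    refine ⟨⟨?_, ?_⟩, ?_, ?_, ?_, ?_, ?_⟩
    · intro i j hji
      rw [Wm_apply, if_neg]
      rintro ⟨h1, h2⟩
      rw [← h1, ← h2] at hji
      simp [ix0, ixN1] at hji
    · ext i j
      rw [Matrix.add_apply, Matrix.mul_apply, Matrix.mul_apply, Matrix.zero_apply]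
      rw [Finset.sum_eq_single (ix0 n)
        (fun b _ hb => by
          rw [Matrix.conjTranspose_apply, Wm_apply,
            if_neg (fun hc => hb hc.1.symm)]
          simp)
        (fun hmem => absurd (Finset.mem_univ _) hmem)]
      rw [Finset.sum_eq_single (ix0 n)
        (fun b _ hb => by
          rw [Wm_apply, if_neg (fun hc => hb hc.1.symm), mul_zero])
        (fun hmem => absurd (Finset.mem_univ _) hmem)]
      rw [Matrix.conjTranspose_apply, Wm_apply, Wm_apply, jrow0 hn, jcol0 hn]
      by_cases hi : i = ixN1 n <;> by_cases hj : j = ixN1 n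
      · subst hi; subst hj
        simp only [if_pos rfl, and_self, if_true, mul_one, one_mul, star_mul',
          Complex.star_def, Complex.conj_I, Complex.conj_ofReal]
        ring
      · subst hi
        simp [Ne.symm hj, hj]
      · subst hj
        simp [Ne.symm hi, hi]
      · simp [Ne.symm hi, Ne.symm hj, hi, hj]
    · show Wm n t (ix0 n) (ix1 n) = 0
      rw [Wm_apply, if_neg (fun hc => hne_1N1 hc.2.symm)]
    · funext j
      show (if 2 ≤ (j:ℕ) ∧ (j:ℕ) + 1 ≤ n then Wm n t (ix0 n) j else 0) = 0
      split
      · rename_i hcond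
        rw [Wm_apply, if_neg]
        rintro ⟨_, h2⟩
        rw [← h2] at hcond
        simp [ixN1] at hcond
      · rfl
    · funext j
      show (if 2 ≤ (j:ℕ) ∧ (j:ℕ) + 1 ≤ n then Wm n t (ix1 n) j else 0) = 0
      split
      · rw [Wm_apply, if_neg (fun hc => hne_01 hc.1)]
      · rfl
    · show Wm n t (ix0 n) (ixN n) = 0
      rw [Wm_apply, if_neg]
      rintro ⟨_, h2⟩
      exact (by simp [ixN, ixN1, Fin.ext_iff] at h2 : False)
    · show (Wm n t (ix1 n) (ixN n)).im = 0
      rw [Wm_apply, if_neg (fun hc => hne_01 hc.1)]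
      rfl
  have hmem : ∀ m, hfun m ∈ expSet n 𝔥 := by
    intro m
    refine ⟨s m • u + Wm n (τ m), ?_, rfl⟩
    exact Submodule.add_mem _ (Submodule.smul_mem _ _ hu) (hroot _ (hWinU (τ m)))
  -- entry formulas
  have eA : ∀ m i j, hfun m i j
      = (if i = j then 1 else 0)
        + ((s m:ℂ) * u i j + (if ix0 n = i ∧ ixN1 n = j then (τ m:ℂ) * Complex.I else 0))
        + (2:ℂ)⁻¹ * ((s m:ℂ)*(s m:ℂ)) * (u*u) i j
        + (6:ℂ)⁻¹ * ((s m:ℂ)*(s m:ℂ)*(s m:ℂ)) * (u*u*u) i j :=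
    fun m i j => expApply hcol0 hrowN1'' hU4' (s m) (τ m) i j
  have hU3v := U3_apply hn htri hrow1' hrowMid'
  have e1n : ∀ m, hfun m (ix1 n) (ixN n) = (s m : ℂ) * (Complex.I * (yy:ℂ)) := by
    intro m
    rw [eA m, hU3v, hu1n,
      U2_row1 htri hrow1' (ixN n) (by rw [hvalN]; omega),
      if_neg hne_1N, if_neg (fun hc => hne_01 hc.1),
      if_neg (fun hc : _ ∧ _ => hne_01 hc.1.symm)]
    ring
  have hne_NN1 : ixN n ≠ ixN1 n := by simp [ixN, ixN1, Fin.ext_iff]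
  have e0n : ∀ m, hfun m (ix0 n) (ixN n)
      = (s m:ℂ) * ηe + (2:ℂ)⁻¹*((s m:ℂ)*(s m:ℂ))*a2 := by
    intro m
    rw [eA m, hA2, hU3v, if_neg hne_0N,
      if_neg (show ¬(ix0 n = ix0 n ∧ ixN1 n = ixN n) from fun hc => hne_NN1 hc.2.symm),
      if_neg (show ¬(ix0 n = ix0 n ∧ ixN n = ixN1 n) from fun hc => hne_NN1 hc.2),
      ← hηedef]
    ring
  have e1n1 : ∀ m, hfun m (ix1 n) (ixN1 n)
      = (s m:ℂ) * ηe' + (2:ℂ)⁻¹*((s m:ℂ)*(s m:ℂ))*b2 := by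
    intro m
    rw [eA m, hB2, hU3v, if_neg hne_1N1,
      if_neg (show ¬(ix0 n = ix1 n ∧ ixN1 n = ixN1 n) from fun hc => hne_01 hc.1),
      if_neg (show ¬(ix1 n = ix0 n ∧ ixN1 n = ixN1 n) from fun hc => hne_01 hc.1.symm),
      ← hηe'def]
    ring
  have e0n1 : ∀ m, hfun m (ix0 n) (ixN1 n) = (2:ℂ)⁻¹*((s m:ℂ)*(s m:ℂ))*dd := by
    intro m
    have hpos : ix0 n = ix0 n ∧ ixN1 n = ixN1 n := ⟨rfl, rfl⟩
    have hg : u (ix0 n) (ix1 n) * (Complex.I*(yy:ℂ)) * (-(starRingEnd ℂ) (u (ix0 n) (ix1 n)))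
        = -(Complex.I*(yy:ℂ)*((Complex.normSq (u (ix0 n) (ix1 n)) : ℝ):ℂ)) := by
      rw [← Complex.mul_conj]; ring
    have hτ : ((τ m:ℝ):ℂ) = -((s m:ℂ)*((sxR n u:ℝ):ℂ))
        + ((s m:ℂ))^3*((yy:ℂ)*((Complex.normSq (u (ix0 n) (ix1 n)):ℝ):ℂ))/6 := by
      simp only [hτdef]; push_cast; ring
    rw [eA m, hU3v, if_neg hne_0N1, if_pos hpos, if_pos hpos, hu1n, hunn1, hu0n1, hg, hτ,
      ← hdddef]
    ring
  -- forget definitional bodies to keep arithmetic automation fast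
  have hsval : ∀ m, s m = (m:ℝ) + M := fun _ => rfl
  clear_value yy Cu K a2 b2 dd ηe ηe' P c3 c2 Q M s τ hfun
  -- entry bound
  have hnn : (0:ℝ) ≤ ((n:ℝ)+2)*Cu^2 := by positivity
  have eBnd : ∀ m i j, ‖hfun m i j‖ ≤ K * (s m)^2 := by
    intro m i j
    have hsm := hs1 m
    have hsm0 : (0:ℝ) ≤ s m := by linarith
    have hss0 : (0:ℝ) ≤ s m * s m := mul_nonneg hsm0 hsm0
    have hss : s m ≤ s m * s m := by nlinarith
    have h1s : 1 ≤ s m * s m := by nlinarith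
    by_cases hij : i = ix0 n ∧ j = ixN1 n
    · obtain ⟨hi, hj⟩ := hij
      subst hi; subst hj
      rw [e0n1 m,
        show ((2:ℂ)⁻¹*((s m:ℂ)*(s m:ℂ))) = (((2:ℝ)⁻¹*(s m*s m) : ℝ) : ℂ) from by
          push_cast; ring,
        norm_mul, Complex.norm_real, Real.norm_eq_abs, _root_.abs_of_nonneg (by linarith : (0:ℝ) ≤ 2⁻¹*(s m*s m))]
      have hd := hU2B (ix0 n) (ixN1 n)
      rw [← hdddef] at hd
      calc 2⁻¹*(s m*s m) * ‖dd‖ ≤ 2⁻¹*(s m*s m)*(((n:ℝ)+2)*Cu^2) :=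
            mul_le_mul_of_nonneg_left hd (by linarith : (0:ℝ) ≤ 2⁻¹*(s m*s m))
        _ ≤ K*(s m)^2 := by
            rw [hKdef]
            nlinarith [mul_le_mul_of_nonneg_left h1s hnn,
              mul_nonneg (mul_nonneg (by linarith : (0:ℝ) ≤ s m)
                (by linarith : (0:ℝ) ≤ s m)) hnn]
    · rw [eA m, hU3v,
        if_neg (show ¬(ix0 n = i ∧ ixN1 n = j) from fun hc => hij ⟨hc.1.symm, hc.2.symm⟩),
        if_neg hij]
      have h1 : ‖if i = j then (1:ℂ) else 0‖ ≤ 1 := by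
        split <;> simp
      have h2 : ‖(s m:ℂ) * u i j‖ ≤ s m * Cu := by
        rw [norm_mul, Complex.norm_real, Real.norm_eq_abs, _root_.abs_of_nonneg (by linarith : (0:ℝ) ≤ s m)]
        exact mul_le_mul_of_nonneg_left (hCuB i j) (by linarith)
      have h3 : ‖(2:ℂ)⁻¹ * ((s m:ℂ)*(s m:ℂ)) * ((u*u) i j)‖
          ≤ 2⁻¹*(s m*s m)*(((n:ℝ)+2)*Cu^2) := by
        rw [show ((2:ℂ)⁻¹*((s m:ℂ)*(s m:ℂ))) = (((2:ℝ)⁻¹*(s m*s m):ℝ):ℂ) from by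
            push_cast; ring,
          norm_mul, Complex.norm_real, Real.norm_eq_abs, _root_.abs_of_nonneg (by linarith : (0:ℝ) ≤ 2⁻¹*(s m*s m))]
        exact mul_le_mul_of_nonneg_left (hU2B i j) (by linarith : (0:ℝ) ≤ 2⁻¹*(s m*s m))
      have hcongr : (if i = j then (1:ℂ) else 0) + ((s m:ℂ) * u i j + 0)
            + (2:ℂ)⁻¹*((s m:ℂ)*(s m:ℂ))*((u*u) i j)
            + (6:ℂ)⁻¹*((s m:ℂ)*(s m:ℂ)*(s m:ℂ))*0
          = ((if i = j then (1:ℂ) else 0) + (s m:ℂ) * u i j)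
            + (2:ℂ)⁻¹*((s m:ℂ)*(s m:ℂ))*((u*u) i j) := by ring
      rw [hcongr]
      refine le_trans (norm_add_le _ _) (le_trans (add_le_add
        (le_trans (norm_add_le _ _) (add_le_add h1 h2)) h3) ?_)
      rw [hKdef]
      nlinarith [mul_le_mul_of_nonneg_left h1s hnn, mul_le_mul_of_nonneg_right hss hCu0,
        mul_le_mul_of_nonneg_left hss hnn,
        mul_nonneg (mul_nonneg (by linarith : (0:ℝ) ≤ s m) (by linarith : (0:ℝ) ≤ s m)) hnn]
  have hEub : ∀ m, entryNorm n (hfun m) ≤ K * (s m)^2 := fun m =>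
    Finset.sup'_le _ _ (fun p _ => eBnd m p.1 p.2)
  have hElb : ∀ m, s m * |yy| ≤ entryNorm n (hfun m) := by
    intro m
    have hval : ‖hfun m (ix1 n) (ixN n)‖ = s m * |yy| := by
      rw [e1n m, norm_mul, norm_mul, Complex.norm_I, Complex.norm_real, Real.norm_eq_abs, Complex.norm_real, Real.norm_eq_abs,
        one_mul, _root_.abs_of_nonneg (by linarith [hs1 m] : (0:ℝ) ≤ s m)]
    rw [← hval]
    exact Finset.le_sup' (fun p : Fin (n+2) × Fin (n+2) => ‖hfun m p.1 p.2‖)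
      (Finset.mem_univ ((ix1 n, ixN n)))
  have hE0 : ∀ m, 0 ≤ entryNorm n (hfun m) := fun m =>
    le_trans (mul_nonneg (by linarith [hs1 m]) (abs_nonneg yy)) (hElb m)
  have habssub : ∀ a b : ℂ, ‖a - b‖ ≤ ‖a‖ + ‖b‖ := by
    intro a b
    simpa [sub_eq_add_neg] using norm_add_le a (-b)
  -- the 2x2 determinant
  have hΔ : ∀ m, (4:ℂ)⁻¹*((s m:ℂ))^4*((P:ℝ):ℂ) + ((s m:ℂ))^3*c3 + ((s m:ℂ))^2*c2
      = hfun m (ix0 n) (ixN n) * hfun m (ix1 n) (ixN1 n)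
        - hfun m (ix0 n) (ixN1 n) * hfun m (ix1 n) (ixN n) := by
    intro m
    rw [e0n m, e1n1 m, e0n1 m, e1n m, hc3def, hc2def, ← hab]
    ring
  have hrholb : ∀ m, (s m)^4 * P/8 ≤ rhoNorm n (hfun m) := by
    intro m
    have hsm := hs1 m
    have habs1 : ‖(4:ℂ)⁻¹*((s m:ℂ))^4*((P:ℝ):ℂ)‖ = 4⁻¹*(s m)^4*P := by
      rw [show ((4:ℂ)⁻¹*((s m:ℂ))^4*((P:ℝ):ℂ)) = (((4:ℝ)⁻¹*(s m)^4*P : ℝ):ℂ) from by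
          push_cast; ring,
        Complex.norm_real, Real.norm_eq_abs, _root_.abs_of_nonneg (mul_nonneg (mul_nonneg (by norm_num)
          (pow_nonneg (by linarith : (0:ℝ) ≤ s m) 4)) hP.le)]
    have habs2 : ‖((s m:ℂ))^3*c3 + ((s m:ℂ))^2*c2‖ ≤ (s m)^3*Q := by
      have hx1 : ‖((s m:ℂ))^3*c3‖ = (s m)^3 * ‖c3‖ := by
        rw [norm_mul, norm_pow, Complex.norm_real, Real.norm_eq_abs,
          _root_.abs_of_nonneg (by linarith : (0:ℝ) ≤ s m)]
      have hx2 : ‖((s m:ℂ))^2*c2‖ = (s m)^2 * ‖c2‖ := by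
        rw [norm_mul, norm_pow, Complex.norm_real, Real.norm_eq_abs,
          _root_.abs_of_nonneg (by linarith : (0:ℝ) ≤ s m)]
      refine le_trans (norm_add_le _ _) ?_
      rw [hx1, hx2, hQdef]
      have h23 : (s m)^2 ≤ (s m)^3 := by nlinarith
      have := mul_le_mul_of_nonneg_right h23 (norm_nonneg c2)
      linarith
    have htri2 : 4⁻¹*(s m)^4*P
        ≤ ‖hfun m (ix0 n) (ixN n) * hfun m (ix1 n) (ixN1 n)
            - hfun m (ix0 n) (ixN1 n) * hfun m (ix1 n) (ixN n)‖ + (s m)^3*Q := by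
      rw [← habs1]
      refine le_trans ?_ (add_le_add le_rfl habs2)
      have heq : (4:ℂ)⁻¹*((s m:ℂ))^4*((P:ℝ):ℂ)
          = (hfun m (ix0 n) (ixN n) * hfun m (ix1 n) (ixN1 n)
            - hfun m (ix0 n) (ixN1 n) * hfun m (ix1 n) (ixN n))
            - (((s m:ℂ))^3*c3 + ((s m:ℂ))^2*c2) := by
        rw [← hΔ m]; ring
      rw [heq]
      exact habssub _ _
    have hq34 : (s m)^3*Q ≤ (s m)^4*P/8 := by
      have h8 := hsQ m
      have h3 : (0:ℝ) < (s m)^3 := pow_pos (hs0 m) 3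
      nlinarith [mul_le_mul_of_nonneg_left h8 h3.le]
    have hfin : (s m)^4*P/8
        ≤ ‖hfun m (ix0 n) (ixN n) * hfun m (ix1 n) (ixN1 n)
            - hfun m (ix0 n) (ixN1 n) * hfun m (ix1 n) (ixN n)‖ := by linarith
    refine le_trans hfin ?_
    exact Finset.le_sup'
      (fun q : (Fin (n+2) × Fin (n+2)) × Fin (n+2) × Fin (n+2) =>
        ‖hfun m q.1.1 q.2.1 * hfun m q.1.2 q.2.2
          - hfun m q.1.1 q.2.2 * hfun m q.1.2 q.2.1‖)
      (Finset.mem_univ (((ix0 n, ix1 n), (ixN n, ixN1 n))))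
  have hrhoub : ∀ m, rhoNorm n (hfun m) ≤ 2 * (entryNorm n (hfun m))^2 := by
    intro m
    refine Finset.sup'_le _ _ ?_
    intro q _
    have hq : ∀ a b, ‖hfun m a b‖ ≤ entryNorm n (hfun m) := fun a b =>
      Finset.le_sup' (fun p : Fin (n+2) × Fin (n+2) => ‖hfun m p.1 p.2‖)
        (Finset.mem_univ ((a, b)))
    have h1 : ‖hfun m q.1.1 q.2.1 * hfun m q.1.2 q.2.2‖
        ≤ (entryNorm n (hfun m))^2 := by
      rw [norm_mul, sq]
      exact mul_le_mul (hq _ _) (hq _ _) (norm_nonneg _) (hE0 m)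
    have h2 : ‖hfun m q.1.1 q.2.2 * hfun m q.1.2 q.2.1‖
        ≤ (entryNorm n (hfun m))^2 := by
      rw [norm_mul, sq]
      exact mul_le_mul (hq _ _) (hq _ _) (norm_nonneg _) (hE0 m)
    calc ‖hfun m q.1.1 q.2.1 * hfun m q.1.2 q.2.2
          - hfun m q.1.1 q.2.2 * hfun m q.1.2 q.2.1‖
        ≤ ‖hfun m q.1.1 q.2.1 * hfun m q.1.2 q.2.2‖
          + ‖hfun m q.1.1 q.2.2 * hfun m q.1.2 q.2.1‖ := habssub _ _
      _ ≤ 2 * (entryNorm n (hfun m))^2 := by linarith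
  have hK0 : (0:ℝ) < K := by linarith
  refine ⟨hfun, P/(8*K^2), 2, div_pos hP (by nlinarith [hK0]), two_pos, hmem, ?_, ?_⟩
  · have h1 : Filter.Tendsto (fun m : ℕ => ((m:ℝ) + M)) Filter.atTop Filter.atTop :=
      Filter.tendsto_atTop_add_const_right _ M tendsto_natCast_atTop_atTop
    have h2 := h1.atTop_mul_const (abs_pos.2 hyy)
    refine Filter.tendsto_atTop_mono (fun m => ?_) h2
    calc ((m:ℝ) + M) * |yy| = s m * |yy| := by rw [hsval]
      _ ≤ entryNorm n (hfun m) := hElb m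
  · intro m
    constructor
    · have hEsq : (entryNorm n (hfun m))^2 ≤ (K*(s m)^2)^2 :=
        pow_le_pow_left₀ (hE0 m) (hEub m) 2
      calc P/(8*K^2) * (entryNorm n (hfun m))^2 ≤ P/(8*K^2) * (K*(s m)^2)^2 :=
            mul_le_mul_of_nonneg_left hEsq (div_nonneg hP.le (by positivity))
        _ = (s m)^4*P/8 := by
            field_simp
        _ ≤ rhoNorm n (hfun m) := hrholb m
    · exact hrhoub m
end
end

section
/- Suppose there is a nonzero element z of 𝔷 with |η_z|² = 𝗑_z·𝗒_z. Then there exist a sequence (h_m) of elements of H and constants c, C > 0 such that ‖h_m‖ → ∞ as m → ∞ and c·‖h_m‖ ≤ ‖ρ(h_m)‖ ≤ C·‖h_m‖ for every m. -/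
open scoped BigOperators

noncomputable section

def sig (n : ℕ) (i : Fin (n+2)) : Fin (n+2) :=
  if (i:ℕ) = 0 then ⟨n+1, by omega⟩ else if (i:ℕ) = 1 then ⟨n, by omega⟩
  else if (i:ℕ) = n then ⟨1, by omega⟩ else if (i:ℕ) = n+1 then ⟨0, by omega⟩ else i

lemma J_eq (n : ℕ) (hn : 2 ≤ n) (i k : Fin (n+2)) :
    Jmat n i k = if k = sig n i then 1 else 0 := by
  have hi := i.isLt; have hk := k.isLt
  unfold Jmat sig
  simp only [Fin.ext_iff]
  split_ifs <;> first | rfl | (exfalso; omega) | (exfalso; simp only [Fin.val_mk] at *; omega)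

lemma J_eq' (n : ℕ) (hn : 2 ≤ n) (i k : Fin (n+2)) :
    Jmat n k i = if k = sig n i then 1 else 0 := by
  have hi := i.isLt; have hk := k.isLt
  unfold Jmat sig
  simp only [Fin.ext_iff]
  split_ifs <;> first | rfl | (exfalso; omega) | (exfalso; simp only [Fin.val_mk] at *; omega)


lemma constraint_eval (n : ℕ) (hn : 2 ≤ n) (z : Matrix (Fin (n+2)) (Fin (n+2)) ℂ)
    (hJ : z.conjTranspose * Jmat n + Jmat n * z = 0) (p q : Fin (n+2)) :
    (starRingEnd ℂ) (z (sig n q) p) + z (sig n p) q = 0 := by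
  have h := congrFun (congrFun hJ p) q
  simp only [Matrix.add_apply, Matrix.mul_apply, Matrix.conjTranspose_apply,
    Matrix.zero_apply] at h
  simp only [J_eq' n hn q, mul_ite, mul_one, mul_zero] at h
  simp only [J_eq n hn p, ite_mul, one_mul, zero_mul] at h
  rw [Finset.sum_ite_eq' Finset.univ (sig n q) (fun k => star (z k p)),
    Finset.sum_ite_eq' Finset.univ (sig n p) (fun k => z k q), if_pos (Finset.mem_univ _),
    if_pos (Finset.mem_univ _)] at h
  exact h

lemma sig_mk0 (n : ℕ) : sig n ⟨0, by omega⟩ = ⟨n+1, by omega⟩ := by simp [sig]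

lemma sig_mk1 (n : ℕ) (hn : 2 ≤ n) : sig n ⟨1, by omega⟩ = ⟨n, by omega⟩ := by
  simp only [sig, Fin.val_mk]
  split_ifs <;> simp only [Fin.ext_iff, Fin.val_mk] <;> first | omega | exact ‹False›.elim

lemma sig_mkN (n : ℕ) (hn : 2 ≤ n) : sig n ⟨n, by omega⟩ = ⟨1, by omega⟩ := by
  simp only [sig, Fin.val_mk]
  split_ifs <;> simp only [Fin.ext_iff, Fin.val_mk] <;> first | omega | exact ‹False›.elim

lemma sig_mkN1 (n : ℕ) (hn : 2 ≤ n) : sig n ⟨n+1, by omega⟩ = ⟨0, by omega⟩ := by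
  simp only [sig, Fin.val_mk]
  split_ifs <;> simp only [Fin.ext_iff, Fin.val_mk] <;> first | omega | exact ‹False›.elim

lemma sig_mid (n : ℕ) (p : Fin (n+2)) (h2 : 2 ≤ (p:ℕ)) (hle : (p:ℕ) + 1 ≤ n) :
    sig n p = p := by
  simp only [sig]
  split_ifs <;> simp only [Fin.ext_iff, Fin.val_mk] <;> first | omega | exact ‹False›.elim

lemma hstruct (n : ℕ) (hn : 2 ≤ n) (z : Matrix (Fin (n+2)) (Fin (n+2)) ℂ)
    (hupper : ∀ i j : Fin (n+2), (j:ℕ) ≤ (i:ℕ) → z i j = 0)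
    (hJ : z.conjTranspose * Jmat n + Jmat n * z = 0)
    (hφ : phiC n z = 0) (hx : xV n z = 0) (hy : yV n z = 0)
    (i j : Fin (n+2)) (hns : ¬(((i:ℕ) = 0 ∨ (i:ℕ) = 1) ∧ ((j:ℕ) = n ∨ (j:ℕ) = n+1))) :
    z i j = 0 := by
  have hjlt := j.isLt
  have hilt := i.isLt
  by_cases hle : (j:ℕ) ≤ (i:ℕ)
  · exact hupper i j hle
  push_neg at hle
  rcases Nat.lt_or_ge (i:ℕ) 2 with hi2 | hi2
  · -- i = 0 or 1
    have hjn : 1 ≤ (j:ℕ) ∧ (j:ℕ) + 1 ≤ n := by omega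
    by_cases hi0 : (i:ℕ) = 0
    · have hieq : i = ⟨0, by omega⟩ := Fin.ext (show (i:ℕ) = 0 by omega)
      rw [hieq]
      by_cases hj1 : (j:ℕ) = 1
      · have hjeq : j = ⟨1, by omega⟩ := Fin.ext (show (j:ℕ) = 1 by omega)
        rw [hjeq]; exact hφ
      · have h := congrFun hx j
        rw [xV, if_pos (⟨by omega, hjn.2⟩ : 2 ≤ (j:ℕ) ∧ (j:ℕ)+1 ≤ n)] at h
        exact h
    · -- i = 1
      have hieq : i = ⟨1, by omega⟩ := Fin.ext (show (i:ℕ) = 1 by omega)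
      rw [hieq]
      have h := congrFun hy j
      rw [yV, if_pos (⟨by omega, hjn.2⟩ : 2 ≤ (j:ℕ) ∧ (j:ℕ)+1 ≤ n)] at h
      exact h
  · rcases Nat.lt_or_ge (i:ℕ) n with hiN | hiN
    · -- i middle : 2 ≤ i ≤ n-1
      have hsi : sig n i = i := sig_mid n i hi2 (by omega)
      rcases Nat.lt_or_ge (j:ℕ) n with hjN | hjN
      · -- j middle
        have h := constraint_eval n hn z hJ i j
        rw [hsi, sig_mid n j (by omega) (by omega), hupper j i (by omega)] at h
        simpa using h
      · by_cases hjn : (j:ℕ) = n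
        · have hjeq : j = ⟨n, by omega⟩ := Fin.ext (show (j:ℕ) = n by omega)
          rw [hjeq]
          have h := constraint_eval n hn z hJ i ⟨n, by omega⟩
          rw [hsi, sig_mkN n hn] at h
          have hy1 : z ⟨1, by omega⟩ i = 0 := by
            have h' := congrFun hy i
            rw [yV, if_pos ⟨hi2, by omega⟩] at h'
            exact h'
          rw [hy1] at h
          simpa using h
        · have hjeq : j = ⟨n+1, by omega⟩ := Fin.ext (show (j:ℕ) = n+1 by omega)
          rw [hjeq]
          have h := constraint_eval n hn z hJ i ⟨n+1, by omega⟩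
          rw [hsi, sig_mkN1 n hn] at h
          have hx1 : z ⟨0, by omega⟩ i = 0 := by
            have h' := congrFun hx i
            rw [xV, if_pos ⟨hi2, by omega⟩] at h'
            exact h'
          rw [hx1] at h
          simpa using h
    · -- i = n (i = n+1 impossible since i < j ≤ n+1)
      have hieq : i = ⟨n, by omega⟩ := Fin.ext (show (i:ℕ) = n by omega)
      have hjeq : j = ⟨n+1, by omega⟩ := Fin.ext (show (j:ℕ) = n+1 by omega)
      rw [hieq, hjeq]
      have h := constraint_eval n hn z hJ ⟨1, by omega⟩ ⟨n+1, by omega⟩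
      have hφ' : z ⟨0, by omega⟩ ⟨1, by omega⟩ = 0 := hφ
      rw [sig_mk1 n hn, sig_mkN1 n hn, hφ'] at h
      simpa using h

theorem exp_sq_zero {k : ℕ} (u : Matrix (Fin (k+2)) (Fin (k+2)) ℂ) (hu : u * u = 0) :
    NormedSpace.exp u = 1 + u := by
  have h := congrFun (NormedSpace.exp_eq_tsum (𝕂 := ℂ) (𝔸 := Matrix (Fin (k+2)) (Fin (k+2)) ℂ)) u
  rw [h, tsum_eq_sum (s := Finset.range 2) ?_]
  · simp [Finset.sum_range_succ]
  · intro b hb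
    have hb2 : 2 ≤ b := by simp at hb; omega
    have hz : u ^ b = 0 := by
      have : u ^ b = u * u * u ^ (b - 2) := by
        rw [← pow_two, ← pow_add]; congr 1; omega
      rw [this, hu, zero_mul]
    simp [hz]

lemma lowbound (n : ℕ) (hn : 2 ≤ n) (z : Matrix (Fin (n+2)) (Fin (n+2)) ℂ)
    (hupper : ∀ i j : Fin (n+2), (j:ℕ) ≤ (i:ℕ) → z i j = 0)
    (hst : ∀ i j : Fin (n+2),
      ¬(((i:ℕ) = 0 ∨ (i:ℕ) = 1) ∧ ((j:ℕ) = n ∨ (j:ℕ) = n+1)) → z i j = 0)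
    (r : ℝ) :
    entryNorm n (1 + r • z) ≤ rhoNorm n (1 + r • z) := by
  have hAd : ∀ i : Fin (n+2), (1 + r • z) i i = 1 := by
    intro i
    simp [Matrix.add_apply, Matrix.one_apply, Matrix.smul_apply, hupper i i le_rfl]
  have hAo : ∀ i j : Fin (n+2), i ≠ j → (1 + r • z) i j = (r : ℂ) * z i j := by
    intro i j hij
    simp [Matrix.add_apply, Matrix.one_apply_ne hij, Matrix.smul_apply, Complex.real_smul]
  have hφ' : z ⟨0, by omega⟩ ⟨1, by omega⟩ = 0 := by
    refine hst _ _ ?_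
    rintro ⟨-, h⟩
    simp only [Fin.val_mk] at h
    omega
  have h01 : (⟨0, by omega⟩ : Fin (n+2)) ≠ ⟨1, by omega⟩ := by
    intro h
    have := congrArg Fin.val h
    simp only [Fin.val_mk] at this
    omega
  have hz10 : z ⟨1, by omega⟩ ⟨0, by omega⟩ = 0 :=
    hupper _ _ (by simp only [Fin.val_mk]; omega)
  have hminor : ∀ q : (Fin (n+2) × Fin (n+2)) × Fin (n+2) × Fin (n+2),
      ‖(1+r•z) q.1.1 q.2.1 * (1+r•z) q.1.2 q.2.2
        - (1+r•z) q.1.1 q.2.2 * (1+r•z) q.1.2 q.2.1‖ ≤ rhoNorm n (1+r•z) :=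
    fun q => Finset.le_sup'
      (fun q : (Fin (n+2) × Fin (n+2)) × Fin (n+2) × Fin (n+2) =>
        ‖(1+r•z) q.1.1 q.2.1 * (1+r•z) q.1.2 q.2.2
          - (1+r•z) q.1.1 q.2.2 * (1+r•z) q.1.2 q.2.1‖) (Finset.mem_univ q)
  have hone := hminor ((⟨0, by omega⟩, ⟨1, by omega⟩), (⟨0, by omega⟩, ⟨1, by omega⟩))
  rw [hAd, hAd, hAo _ _ h01, hφ', mul_zero, zero_mul, one_mul, sub_zero, norm_one] at hone
  unfold entryNorm
  apply Finset.sup'_le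
  rintro ⟨i, j⟩ -
  by_cases hij : i = j
  · subst hij
    rw [hAd, norm_one]
    exact hone
  · by_cases hzij : z i j = 0
    · rw [hAo i j hij, hzij, mul_zero, norm_zero]
      linarith
    · have hs : ((i:ℕ) = 0 ∨ (i:ℕ) = 1) ∧ ((j:ℕ) = n ∨ (j:ℕ) = n+1) := by
        by_contra hc; exact hzij (hst i j hc)
      have hj2 : 2 ≤ (j:ℕ) := by rcases hs.2 with h|h <;> omega
      rcases hs.1 with hi0 | hi1
      · have hieq : i = ⟨0, by omega⟩ := Fin.ext (show (i:ℕ) = 0 by omega)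
        rw [hieq]
        have hv := hminor ((⟨1, by omega⟩, ⟨0, by omega⟩), (⟨1, by omega⟩, j))
        rw [hAd, one_mul, hAo _ _ h01, hφ', mul_zero, mul_zero, sub_zero] at hv
        exact hv
      · have hieq : i = ⟨1, by omega⟩ := Fin.ext (show (i:ℕ) = 1 by omega)
        rw [hieq]
        have hv := hminor ((⟨0, by omega⟩, ⟨1, by omega⟩), (⟨0, by omega⟩, j))
        rw [hAd, one_mul, hAo _ _ (Ne.symm h01), hz10, mul_zero, mul_zero, sub_zero] at hv
        exact hv

lemma upbound (n : ℕ) (hn : 2 ≤ n) (z : Matrix (Fin (n+2)) (Fin (n+2)) ℂ)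
    (hupper : ∀ i j : Fin (n+2), (j:ℕ) ≤ (i:ℕ) → z i j = 0)
    (hst : ∀ i j : Fin (n+2),
      ¬(((i:ℕ) = 0 ∨ (i:ℕ) = 1) ∧ ((j:ℕ) = n ∨ (j:ℕ) = n+1)) → z i j = 0)
    (key0 : z ⟨0, by omega⟩ ⟨n, by omega⟩ * z ⟨1, by omega⟩ ⟨n+1, by omega⟩
      - z ⟨0, by omega⟩ ⟨n+1, by omega⟩ * z ⟨1, by omega⟩ ⟨n, by omega⟩ = 0)
    (r : ℝ) :
    rhoNorm n (1 + r • z) ≤ 2 * entryNorm n (1 + r • z) := by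
  have hAd : ∀ i : Fin (n+2), (1 + r • z) i i = 1 := by
    intro i
    simp [Matrix.add_apply, Matrix.one_apply, Matrix.smul_apply, hupper i i le_rfl]
  have hAo : ∀ i j : Fin (n+2), i ≠ j → (1 + r • z) i j = (r : ℂ) * z i j := by
    intro i j hij
    simp [Matrix.add_apply, Matrix.one_apply_ne hij, Matrix.smul_apply, Complex.real_smul]
  have hent : ∀ p q : Fin (n+2), ‖(1+r•z) p q‖ ≤ entryNorm n (1+r•z) :=
    fun p q => Finset.le_sup'
      (fun pq : Fin (n+2) × Fin (n+2) => ‖(1+r•z) pq.1 pq.2‖) (Finset.mem_univ (p, q))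
  have hE1 : 1 ≤ entryNorm n (1+r•z) := by
    have h := hent ⟨0, by omega⟩ ⟨0, by omega⟩
    rwa [hAd, norm_one] at h
  have hE0 : 0 ≤ entryNorm n (1+r•z) := by linarith
  have hsmall : ∀ p q : Fin (n+2),
      ¬(((p:ℕ) = 0 ∨ (p:ℕ) = 1) ∧ ((q:ℕ) = n ∨ (q:ℕ) = n+1)) →
      ‖(1+r•z) p q‖ ≤ 1 := by
    intro p q hpq
    by_cases hpq' : p = q
    · rw [hpq', hAd, norm_one]
    · rw [hAo _ _ hpq', hst p q hpq, mul_zero, norm_zero]; linarith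
  unfold rhoNorm
  apply Finset.sup'_le
  rintro ⟨⟨i, i'⟩, j, j'⟩ -
  by_cases hs : (((i:ℕ) = 0 ∨ (i:ℕ) = 1) ∧ ((j:ℕ) = n ∨ (j:ℕ) = n+1))
      ∧ (((i':ℕ) = 0 ∨ (i':ℕ) = 1) ∧ ((j':ℕ) = n ∨ (j':ℕ) = n+1))
  · obtain ⟨⟨hi, hj⟩, hi', hj'⟩ := hs
    have hile : (i:ℕ) ≤ 1 := by rcases hi with h|h <;> omega
    have hi'le : (i':ℕ) ≤ 1 := by rcases hi' with h|h <;> omega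
    have hjge : n ≤ (j:ℕ) := by rcases hj with h|h <;> omega
    have hj'ge : n ≤ (j':ℕ) := by rcases hj' with h|h <;> omega
    have hij : i ≠ j := fun e => by have := congrArg Fin.val e; omega
    have hij' : i ≠ j' := fun e => by have := congrArg Fin.val e; omega
    have hi'j : i' ≠ j := fun e => by have := congrArg Fin.val e; omega
    have hi'j' : i' ≠ j' := fun e => by have := congrArg Fin.val e; omega
    have hzkey : z i j * z i' j' - z i j' * z i' j = 0 := by
      have hieq : i = ⟨0, by omega⟩ ∨ i = ⟨1, by omega⟩ := by
        rcases hi with h|h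
        exacts [Or.inl (Fin.ext (show (i:ℕ) = 0 by omega)),
          Or.inr (Fin.ext (show (i:ℕ) = 1 by omega))]
      have hi'eq : i' = ⟨0, by omega⟩ ∨ i' = ⟨1, by omega⟩ := by
        rcases hi' with h|h
        exacts [Or.inl (Fin.ext (show (i':ℕ) = 0 by omega)),
          Or.inr (Fin.ext (show (i':ℕ) = 1 by omega))]
      have hjeq : j = ⟨n, by omega⟩ ∨ j = ⟨n+1, by omega⟩ := by
        rcases hj with h|h
        exacts [Or.inl (Fin.ext (show (j:ℕ) = n by omega)),
          Or.inr (Fin.ext (show (j:ℕ) = n+1 by omega))]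
      have hj'eq : j' = ⟨n, by omega⟩ ∨ j' = ⟨n+1, by omega⟩ := by
        rcases hj' with h|h
        exacts [Or.inl (Fin.ext (show (j':ℕ) = n by omega)),
          Or.inr (Fin.ext (show (j':ℕ) = n+1 by omega))]
      rcases hieq with h|h <;> rcases hi'eq with h'|h' <;> rcases hjeq with g|g <;>
        rcases hj'eq with g'|g' <;> rw [h, h', g, g'] <;>
        first
          | linear_combination key0
          | linear_combination -key0
          | ring1
    have hmz : (1+r•z) i j * (1+r•z) i' j' - (1+r•z) i j' * (1+r•z) i' j = 0 := by
      rw [hAo _ _ hij, hAo _ _ hi'j', hAo _ _ hij', hAo _ _ hi'j]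
      linear_combination ((r:ℝ):ℂ)^2 * hzkey
    rw [hmz, norm_zero]
    linarith
  · have hs2 : ¬((((i:ℕ) = 0 ∨ (i:ℕ) = 1) ∧ ((j':ℕ) = n ∨ (j':ℕ) = n+1))
        ∧ (((i':ℕ) = 0 ∨ (i':ℕ) = 1) ∧ ((j:ℕ) = n ∨ (j:ℕ) = n+1))) :=
      fun ⟨h1, h2⟩ => hs ⟨⟨h1.1, h2.2⟩, ⟨h2.1, h1.2⟩⟩
    have hprod : ∀ (p q p' q' : Fin (n+2)),
        ¬((((p:ℕ) = 0 ∨ (p:ℕ) = 1) ∧ ((q:ℕ) = n ∨ (q:ℕ) = n+1))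
          ∧ (((p':ℕ) = 0 ∨ (p':ℕ) = 1) ∧ ((q':ℕ) = n ∨ (q':ℕ) = n+1))) →
        ‖(1+r•z) p q * (1+r•z) p' q'‖ ≤ entryNorm n (1+r•z) := by
      intro p q p' q' hnpq
      rw [norm_mul]
      rcases not_and_or.mp hnpq with h | h
      · calc ‖(1+r•z) p q‖ * ‖(1+r•z) p' q'‖
            ≤ 1 * entryNorm n (1+r•z) :=
              mul_le_mul (hsmall _ _ h) (hent _ _) (by positivity) (by linarith)
          _ = entryNorm n (1+r•z) := one_mul _
      · calc ‖(1+r•z) p q‖ * ‖(1+r•z) p' q'‖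
            ≤ entryNorm n (1+r•z) * 1 :=
              mul_le_mul (hent _ _) (hsmall _ _ h) (by positivity) hE0
          _ = entryNorm n (1+r•z) := mul_one _
    calc ‖(1+r•z) i j * (1+r•z) i' j' - (1+r•z) i j' * (1+r•z) i' j‖
        = ‖(1+r•z) i j * (1+r•z) i' j' - (1+r•z) i j' * (1+r•z) i' j‖ :=
          rfl
      _ ≤ ‖(1+r•z) i j * (1+r•z) i' j'‖ + ‖(1+r•z) i j' * (1+r•z) i' j‖ := norm_sub_le _ _
      _ = ‖(1+r•z) i j * (1+r•z) i' j'‖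
          + ‖(1+r•z) i j' * (1+r•z) i' j‖ := by
            rfl
      _ ≤ entryNorm n (1+r•z) + entryNorm n (1+r•z) := add_le_add (hprod _ _ _ _ hs) (hprod _ _ _ _ hs2)
      _ = 2 * entryNorm n (1+r•z) := by ring
theorem stmt9 (n : ℕ) (hn : 2 ≤ n)
    (𝔥 : Submodule ℝ (Matrix (Fin (n+2)) (Fin (n+2)) ℂ))
    (h_sub : ∀ u ∈ 𝔥, inLieN n u)
    (h_bracket : ∀ u ∈ 𝔥, ∀ v ∈ 𝔥, u * v - v * u ∈ 𝔥)
    (z : Matrix (Fin (n+2)) (Fin (n+2)) ℂ) (hz : inZ n 𝔥 z) (hz0 : z ≠ 0)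
    (heq : Complex.normSq (etaC n z) = sxR n z * syR n z) :
    ∃ (h : ℕ → Matrix (Fin (n+2)) (Fin (n+2)) ℂ) (c C : ℝ),
      0 < c ∧ 0 < C ∧ (∀ m, h m ∈ expSet n 𝔥) ∧
      Filter.Tendsto (fun m => entryNorm n (h m)) Filter.atTop Filter.atTop ∧
      ∀ m, c * (entryNorm n (h m)) ≤ rhoNorm n (h m) ∧
        rhoNorm n (h m) ≤ C * (entryNorm n (h m)) := by
  obtain ⟨hzh, hφ, hx, hy⟩ := hz
  obtain ⟨hupper, hJ⟩ := h_sub z hzh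
  -- named indices
  have hne : ∀ (p q : Fin (n+2)), (p:ℕ) ≠ (q:ℕ) → p ≠ q := fun p q h e => h (by rw [e])
  have hst : ∀ i j : Fin (n+2),
      ¬(((i:ℕ) = 0 ∨ (i:ℕ) = 1) ∧ ((j:ℕ) = n ∨ (j:ℕ) = n+1)) → z i j = 0 :=
    hstruct n hn z hupper hJ hφ hx hy
  -- relations
  have hrel : z ⟨1, by omega⟩ ⟨n+1, by omega⟩ = -(starRingEnd ℂ) (z ⟨0, by omega⟩ ⟨n, by omega⟩) := by
    have h := constraint_eval n hn z hJ ⟨n, by omega⟩ ⟨n+1, by omega⟩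
    rw [sig_mkN n hn, sig_mkN1 n hn] at h
    linear_combination h
  have ha : (z ⟨0, by omega⟩ ⟨n+1, by omega⟩).re = 0 := by
    have h := constraint_eval n hn z hJ ⟨n+1, by omega⟩ ⟨n+1, by omega⟩
    rw [sig_mkN1 n hn] at h
    have := congrArg Complex.re h
    simp only [Complex.add_re, Complex.conj_re, Complex.zero_re] at this
    linarith
  have hb : (z ⟨1, by omega⟩ ⟨n, by omega⟩).re = 0 := by
    have h := constraint_eval n hn z hJ ⟨n, by omega⟩ ⟨n, by omega⟩
    rw [sig_mkN n hn] at h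
    have := congrArg Complex.re h
    simp only [Complex.add_re, Complex.conj_re, Complex.zero_re] at this
    linarith
  have heq' : Complex.normSq (z ⟨0, by omega⟩ ⟨n, by omega⟩)
      = (z ⟨0, by omega⟩ ⟨n+1, by omega⟩).im * (z ⟨1, by omega⟩ ⟨n, by omega⟩).im := heq
  have key0 : z ⟨0, by omega⟩ ⟨n, by omega⟩ * z ⟨1, by omega⟩ ⟨n+1, by omega⟩
      - z ⟨0, by omega⟩ ⟨n+1, by omega⟩ * z ⟨1, by omega⟩ ⟨n, by omega⟩ = 0 := by
    rw [hrel]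
    have he2 := heq'
    rw [Complex.normSq_apply] at he2
    apply Complex.ext <;>
      simp only [Complex.sub_re, Complex.sub_im, Complex.mul_re, Complex.mul_im,
        Complex.neg_re, Complex.neg_im, Complex.conj_re, Complex.conj_im,
        Complex.zero_re, Complex.zero_im, ha, hb, zero_mul, mul_zero, neg_neg,
        neg_zero, add_zero, zero_add, sub_zero, zero_sub, mul_neg, neg_mul] <;>
      linarith [he2]
  -- z squares to zero
  have hzz : z * z = 0 := by
    ext i j
    rw [Matrix.mul_apply, Matrix.zero_apply]
    apply Finset.sum_eq_zero
    intro k _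
    by_cases hks : ((i:ℕ) = 0 ∨ (i:ℕ) = 1) ∧ ((k:ℕ) = n ∨ (k:ℕ) = n+1)
    · have hk2 : ¬(((k:ℕ) = 0 ∨ (k:ℕ) = 1) ∧ ((j:ℕ) = n ∨ (j:ℕ) = n+1)) := by
        rintro ⟨h1, -⟩; rcases hks.2 with h2 | h2 <;> omega
      rw [hst k j hk2, mul_zero]
    · rw [hst i k hks, zero_mul]
  -- pick a nonzero entry
  obtain ⟨p, hp⟩ : ∃ p : Fin (n+2) × Fin (n+2), z p.1 p.2 ≠ 0 := by
    by_contra hc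
    push_neg at hc
    exact hz0 (by ext i j; exact hc (i, j))
  have hpne : p.1 ≠ p.2 := by
    intro e
    exact hp (hupper p.1 p.2 (by rw [e]))
  have hAo : ∀ (r : ℝ) (i j : Fin (n+2)), i ≠ j → (1 + r • z) i j = (r : ℂ) * z i j := by
    intro r i j hij
    simp [Matrix.add_apply, Matrix.one_apply_ne hij, Matrix.smul_apply, Complex.real_smul]
  refine ⟨fun m => 1 + (((m:ℝ)+1)) • z, 1, 2, one_pos, two_pos, ?_, ?_, ?_⟩
  · intro m
    refine ⟨((m:ℝ)+1) • z, Submodule.smul_mem _ _ hzh, ?_⟩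
    have hu : ((((m:ℝ)+1)) • z) * ((((m:ℝ)+1)) • z) = 0 := by
      rw [smul_mul_assoc, mul_smul_comm, smul_smul, hzz, smul_zero]
    exact exp_sq_zero _ hu
  · have hbnd : ∀ m : ℕ, ((m:ℝ)+1) * ‖z p.1 p.2‖
        ≤ entryNorm n (1 + (((m:ℝ)+1)) • z) := by
      intro m
      have hle := Finset.le_sup'
        (fun q : Fin (n+2) × Fin (n+2) =>
          ‖(1 + (((m:ℝ)+1)) • z) q.1 q.2‖) (Finset.mem_univ p)
      rw [hAo _ _ _ hpne, norm_mul, Complex.norm_real, Real.norm_eq_abs,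
        abs_of_pos (by positivity : (0:ℝ) < (m:ℝ)+1)] at hle
      exact hle
    apply Filter.tendsto_atTop_mono hbnd
    have h1 : Filter.Tendsto (fun m : ℕ => ((m:ℝ)+1)) Filter.atTop Filter.atTop :=
      Filter.tendsto_atTop_add_const_right _ 1 tendsto_natCast_atTop_atTop
    exact h1.atTop_mul_const (norm_pos_iff.mpr hp)
  · intro m
    constructor
    · rw [one_mul]
      exact lowbound n hn z hupper hst ((m:ℝ)+1)
    · exact upbound n hn z hupper hst key0 ((m:ℝ)+1)
end
end
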